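/- For ξ ∈ ℝ² with ξ ≠ 0 and j ∈ {1, 2}, define F_j(ξ) = 2 ξ_j · sqrt(|ξ| · tanh|ξ|) / ( |ξ| · tanh|ξ| + (1 − tanh²|ξ|) · |ξ|² ). Then F_j is bounded on the punctured unit ball { ξ ∈ ℝ² : 0 < |ξ| ≤ 1 }; i.e., there exists C > 0 such that |F_j(ξ)| ≤ C whenever 0 < |ξ| ≤ 1. -/

import Mathlib

/-! On the punctured unit ball the denominator is at least `r tanh r` with `r = |ξ|`, and
`|ξ_j| ≤ r`, so `|F_j(ξ)| ≤ 2 sqrt(r / tanh r)`. Since `r ≤ sinh r`, `r / tanh r ≤ cosh r ≤ cosh 1`,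
which gives the bound `2 sqrt(cosh 1)`. -/

namespace Real

theorem tanh_pos {x : ℝ} (hx : 0 < x) : 0 < tanh x := by
  rw [tanh_eq_sinh_div_cosh]
  exact div_pos (sinh_pos_iff.mpr hx) (cosh_pos x)

theorem self_div_tanh_le_cosh {x : ℝ} (hx : 0 < x) : x / tanh x ≤ cosh x := by
  rw [tanh_eq_sinh_div_cosh, div_div_eq_mul_div, div_le_iff₀ (sinh_pos_iff.mpr hx), mul_comm]
  exact mul_le_mul_of_nonneg_left (self_le_sinh_iff.mpr hx.le) (cosh_pos x).le

end Real

open Real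

/-- `F_j(ξ)` written through `r = |ξ|` and `a = ξ_j`. -/
noncomputable def nonstationaryPhaseField (r a : ℝ) : ℝ :=
  2 * a * √(r * tanh r) / (r * tanh r + (1 - tanh r ^ 2) * r ^ 2)

theorem abs_nonstationaryPhaseField_le {r a : ℝ} (hr : 0 < r) (ha : |a| ≤ r) :
    |nonstationaryPhaseField r a| ≤ 2 * √(cosh r) := by
  unfold nonstationaryPhaseField
  set t := tanh r
  have ht : 0 < t := tanh_pos hr
  have hrt : 0 < r * t := mul_pos hr ht
  have hden : r * t ≤ r * t + (1 - t ^ 2) * r ^ 2 := by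
    have : 0 ≤ 1 - t ^ 2 := by linarith [tanh_sq_lt_one r]
    nlinarith [sq_nonneg r]
  rw [abs_div, abs_of_pos (hrt.trans_le hden), abs_mul, abs_mul, abs_two,
    abs_of_nonneg (sqrt_nonneg _)]
  calc 2 * |a| * √(r * t) / (r * t + (1 - t ^ 2) * r ^ 2)
      ≤ 2 * r * √(r * t) / (r * t) := by gcongr
    _ = 2 * √(r / t) := by
        rw [show r / t = r * t / t ^ 2 by field_simp, sqrt_div' _ (sq_nonneg t),
          sqrt_sq ht.le]
        field_simp
    _ ≤ 2 * √(cosh r) := by gcongr; exact self_div_tanh_le_cosh hr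

/-- The vector field `F_j = (1/|∇ω|²) ∂_{ξ_j} ω` used in the non-stationary
phase argument for the water-waves dispersion relation in dimension `2`
is bounded on the punctured unit ball. -/
theorem nonstationary_phase_field_bounded
    (F : Fin 2 → EuclideanSpace ℝ (Fin 2) → ℝ)
    (hF : ∀ (j : Fin 2) (ξ : EuclideanSpace ℝ (Fin 2)), ξ ≠ 0 →
      F j ξ = 2 * ξ j * Real.sqrt (‖ξ‖ * Real.tanh ‖ξ‖) /
        (‖ξ‖ * Real.tanh ‖ξ‖ + (1 - Real.tanh ‖ξ‖ ^ 2) * ‖ξ‖ ^ 2)) :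
    ∃ C : ℝ, 0 < C ∧ ∀ (j : Fin 2) (ξ : EuclideanSpace ℝ (Fin 2)),
      ξ ≠ 0 → ‖ξ‖ ≤ 1 → |F j ξ| ≤ C := by
  refine ⟨2 * √(cosh 1), by positivity, fun j ξ hξ hξ1 => ?_⟩
  have hr : 0 < ‖ξ‖ := norm_pos_iff.mpr hξ
  have hcosh : cosh ‖ξ‖ ≤ cosh 1 := by
    rw [cosh_le_cosh, abs_norm, abs_one]
    exact hξ1
  rw [hF j ξ hξ]
  have hj : |ξ j| ≤ ‖ξ‖ := by simpa using PiLp.norm_apply_le ξ j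
  calc |nonstationaryPhaseField ‖ξ‖ (ξ j)| ≤ 2 * √(cosh ‖ξ‖) :=
        abs_nonstationaryPhaseField_le hr hj
    _ ≤ 2 * √(cosh 1) := by gcongr
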